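/- Let M ∈ so(n, ℂ). Consider the bilinear form Λ_1 on gl(n,ℂ) = so(n,ℂ) ⊕ Sym(n,ℂ) given at the point M by Λ_1(ξ_1 + η_1, ξ_2 + η_2) = −⟨M, [ξ_1, ξ_2] + [ξ_1, η_2] + [η_1, ξ_2]⟩, where ξ_i ∈ so(n,ℂ), η_i ∈ Sym(n,ℂ) and ⟨X,Y⟩ = −(1/2)tr(XY). Then the kernel of Λ_1 at M equals so(n,ℂ)_M ⊕ Sym(n,ℂ), where so(n,ℂ)_M = {ξ ∈ so(n,ℂ) : [ξ, M] = 0} is the centralizer of M in so(n,ℂ). Explicitly: ξ + η (with ξ skew, η symmetric) satisfies Λ_1(ξ + η, ζ) = 0 for all ζ ∈ gl(n,ℂ) if and only if [M, ξ] = 0. -/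

import Mathlib

open Matrix

/-- The pairing `⟨X, Y⟩ = −(1/2)·tr(XY)` on `gl(n, ℂ)`. -/
noncomputable def glPairing {n : ℕ} (X Y : Matrix (Fin n) (Fin n) ℂ) : ℂ :=
  -(1 / 2 : ℂ) * (X * Y).trace

/-- The Poisson bivector `Λ₁` of the symmetric pair `gl(n,ℂ) = so(n,ℂ) ⊕ Sym(n,ℂ)`
evaluated at the point `M`, on cotangent directions `ξ₁ + η₁` and `ξ₂ + η₂` with
`ξᵢ` skew and `ηᵢ` symmetric:
`Λ₁(ξ₁ + η₁, ξ₂ + η₂) = −⟨M, [ξ₁, ξ₂] + [ξ₁, η₂] + [η₁, ξ₂]⟩`. -/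
noncomputable def Lambda1 {n : ℕ} (M ξ₁ η₁ ξ₂ η₂ : Matrix (Fin n) (Fin n) ℂ) : ℂ :=
  -glPairing M ((ξ₁ * ξ₂ - ξ₂ * ξ₁) + (ξ₁ * η₂ - η₂ * ξ₁) + (η₁ * ξ₂ - ξ₂ * η₁))

/-!
Split `ζ = ζ₁ + ζ₂` into skew and symmetric parts. By cyclicity of the trace,
`Λ₁(ξ + η, ζ) = ½ tr([M, ξ] ζ) + ½ tr([M, η] ζ₁)`, and the second term vanishes because `[M, η]`
is symmetric while `ζ₁` is skew. The kernel condition is then the nondegeneracy of the trace form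
`(A, ζ) ↦ tr(A ζ)`.
-/

namespace Matrix

variable {n R : Type*} [Fintype n] [CommRing R]

theorem trace_mul_eq_zero_of_transpose_eq_of_transpose_eq_neg [NoZeroDivisors R] [CharZero R]
    {S K : Matrix n n R} (hS : Sᵀ = S) (hK : Kᵀ = -K) : (S * K).trace = 0 := by
  rw [← CharZero.eq_neg_self_iff]
  calc (S * K).trace = (S * K)ᵀ.trace := (trace_transpose _).symm
    _ = -(S * K).trace := by
      rw [transpose_mul, hS, hK, Matrix.neg_mul, trace_neg, trace_mul_comm]

theorem transpose_commutator_of_transpose_eq_neg_of_transpose_eq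
    {M η : Matrix n n R} (hM : Mᵀ = -M) (hη : ηᵀ = η) :
    (M * η - η * M)ᵀ = M * η - η * M := by
  rw [transpose_sub, transpose_mul, transpose_mul, hM, hη, Matrix.mul_neg, Matrix.neg_mul,
    sub_neg_eq_add, neg_add_eq_sub]

theorem trace_mul_commutator (M X Y : Matrix n n R) :
    (M * (X * Y - Y * X)).trace = ((M * X - X * M) * Y).trace := by
  rw [Matrix.mul_sub, Matrix.sub_mul, trace_sub, trace_sub, ← Matrix.mul_assoc,
    ← Matrix.mul_assoc, trace_mul_cycle M Y X]

end Matrix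

theorem Lambda1_eq_half_trace_commutator_mul {n : ℕ} {M η ξ₂ : Matrix (Fin n) (Fin n) ℂ}
    (hM : Mᵀ = -M) (hη : ηᵀ = η) (hξ₂ : ξ₂ᵀ = -ξ₂) (ξ η₂ : Matrix (Fin n) (Fin n) ℂ) :
    Lambda1 M ξ η ξ₂ η₂ = (1 / 2 : ℂ) * ((M * ξ - ξ * M) * (ξ₂ + η₂)).trace := by
  have hη_vanishes : ((M * η - η * M) * ξ₂).trace = 0 :=
    trace_mul_eq_zero_of_transpose_eq_of_transpose_eq_neg
      (transpose_commutator_of_transpose_eq_neg_of_transpose_eq hM hη) hξ₂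
  have hsplit : (ξ * ξ₂ - ξ₂ * ξ) + (ξ * η₂ - η₂ * ξ) + (η * ξ₂ - ξ₂ * η)
      = (ξ * (ξ₂ + η₂) - (ξ₂ + η₂) * ξ) + (η * ξ₂ - ξ₂ * η) := by
    noncomm_ring
  rw [Lambda1, glPairing, hsplit, Matrix.mul_add, trace_add, trace_mul_commutator,
    trace_mul_commutator, hη_vanishes]
  ring

theorem lambda1_kernel_general (n : ℕ) (M : Matrix (Fin n) (Fin n) ℂ) (hM : Mᵀ = -M)
    (ξ η : Matrix (Fin n) (Fin n) ℂ) (hη : ηᵀ = η) :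
    (∀ ζ : Matrix (Fin n) (Fin n) ℂ,
        Lambda1 M ξ η ((1 / 2 : ℂ) • (ζ - ζᵀ)) ((1 / 2 : ℂ) • (ζ + ζᵀ)) = 0)
      ↔ M * ξ - ξ * M = 0 := by
  have hskew (ζ : Matrix (Fin n) (Fin n) ℂ) :
      ((1 / 2 : ℂ) • (ζ - ζᵀ))ᵀ = -((1 / 2 : ℂ) • (ζ - ζᵀ)) := by
    rw [transpose_smul, transpose_sub, transpose_transpose, ← smul_neg, neg_sub]
  have hparts (ζ : Matrix (Fin n) (Fin n) ℂ) :
      (1 / 2 : ℂ) • (ζ - ζᵀ) + (1 / 2 : ℂ) • (ζ + ζᵀ) = ζ := by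
    rw [← smul_add, sub_add_add_cancel, ← two_smul ℂ ζ, smul_smul]
    norm_num
  have hΛ (ζ : Matrix (Fin n) (Fin n) ℂ) :
      Lambda1 M ξ η ((1 / 2 : ℂ) • (ζ - ζᵀ)) ((1 / 2 : ℂ) • (ζ + ζᵀ))
        = (1 / 2 : ℂ) * ((M * ξ - ξ * M) * ζ).trace := by
    rw [Lambda1_eq_half_trace_commutator_mul hM hη (hskew ζ), hparts]
  rw [ext_iff_trace_mul_right (B := 0)]
  refine forall_congr' fun ζ => ?_
  rw [hΛ, Matrix.zero_mul, trace_zero, mul_eq_zero, or_iff_right (by norm_num)]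

/-- For `M ∈ so(n, ℂ)`, the kernel of `Λ₁` at `M` equals
`so(n,ℂ)_M ⊕ Sym(n,ℂ)`: an element `ξ + η` (with `ξ` skew, `η` symmetric) satisfies
`Λ₁(ξ + η, ζ) = 0` for all `ζ ∈ gl(n, ℂ)` (decomposed as `ζ = ζ₁ + ζ₂`, skew plus
symmetric part) if and only if `[M, ξ] = 0`. -/
theorem lambda1_kernel (n : ℕ) (M : Matrix (Fin n) (Fin n) ℂ) (hM : Mᵀ = -M)
    (ξ η : Matrix (Fin n) (Fin n) ℂ) (hξ : ξᵀ = -ξ) (hη : ηᵀ = η) :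
    (∀ ζ : Matrix (Fin n) (Fin n) ℂ,
        Lambda1 M ξ η ((1 / 2 : ℂ) • (ζ - ζᵀ)) ((1 / 2 : ℂ) • (ζ + ζᵀ)) = 0)
      ↔ M * ξ - ξ * M = 0 :=
  lambda1_kernel_general n M hM ξ η hη
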